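/- Let α : B → C be a surjective non-unital k-algebra homomorphism and β, γ : C → B two k-linear maps with α∘β = α∘γ = id_C, with classifying maps ξ_β, ξ_γ : J(C) → ker α. Let Ū : TensorAlgebra k C → Polynomial (Unitization k B) be the unique k-algebra homomorphism with Ū(ι c) = C(inr(β c)) + C(inr(γ c − β c))·X for all c ∈ C. Then: (i) Polynomial.map (Unitization.map α) ∘ Ū = Polynomial.C ∘ η_C; (ii) evaluation at X = 0 composed with Ū equals γ_β, and evaluation at X = 1 composed with Ū equals γ_γ. Consequently, for every a ∈ J(C) all coefficients of Ū(a) lie in inr(ker α), and Ū realizes an elementary polynomial homotopy between the classifying maps ξ_β and ξ_γ; i.e. the classifying map of a k-split extension is unique up to elementary homotopy. -/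

import Mathlib

noncomputable section

namespace NUPolyAux

/-! Auxiliary constructions at the level of finitely supported functions. -/

variable {R : Type*} [NonUnitalRing R]

/-- Convolution product of coefficient sequences. -/
def mulF (p q : ℕ →₀ R) : ℕ →₀ R :=
  p.sum fun i a => q.sum fun j b => Finsupp.single (i + j) (a * b)

/-- Interpretation of a coefficient sequence as a polynomial over the
unitization of `R`. -/
def toPUF (p : ℕ →₀ R) : Polynomial (Unitization ℤ R) :=
  p.sum fun i a => Polynomial.monomial i (Unitization.inr a)

theorem toPUF_single (i : ℕ) (a : R) :
    toPUF (Finsupp.single i a) = Polynomial.monomial i (Unitization.inr a) := by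
  rw [toPUF, Finsupp.sum_single_index]
  simp

theorem coeff_toPUF (p : ℕ →₀ R) (n : ℕ) :
    (toPUF p).coeff n = Unitization.inr (p n) := by
  classical
  rw [toPUF, Finsupp.sum, Polynomial.finset_sum_coeff]
  simp only [Polynomial.coeff_monomial]
  rw [Finset.sum_ite_eq' p.support n fun i => Unitization.inr (p i)]
  split
  · rfl
  · next h => rw [Finsupp.notMem_support_iff.mp h, Unitization.inr_zero]

theorem toPUF_injective : Function.Injective (toPUF (R := R)) := by
  intro p q h
  ext n
  apply Unitization.inr_injective (R := ℤ)
  rw [← coeff_toPUF, ← coeff_toPUF, h]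

theorem toPUF_zero : toPUF (0 : ℕ →₀ R) = 0 := by
  refine Polynomial.ext fun n => ?_
  rw [coeff_toPUF, Finsupp.zero_apply, Unitization.inr_zero, Polynomial.coeff_zero]

theorem toPUF_add (p q : ℕ →₀ R) : toPUF (p + q) = toPUF p + toPUF q := by
  refine Polynomial.ext fun n => ?_
  rw [coeff_toPUF, Polynomial.coeff_add, coeff_toPUF, coeff_toPUF,
    Finsupp.add_apply, Unitization.inr_add]

/-- `toPUF` as an additive monoid homomorphism. -/
def toPUFHom : (ℕ →₀ R) →+ Polynomial (Unitization ℤ R) where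
  toFun := toPUF
  map_zero' := toPUF_zero
  map_add' := toPUF_add

@[simp] theorem toPUFHom_apply (p : ℕ →₀ R) : toPUFHom p = toPUF p := rfl

theorem toPUF_mulF (p q : ℕ →₀ R) : toPUF (mulF p q) = toPUF p * toPUF q := by
  classical
  have h1 : toPUF (mulF p q)
      = p.sum fun i a => q.sum fun j b =>
          Polynomial.monomial (i + j) (Unitization.inr (a * b)) := by
    rw [mulF, ← toPUFHom_apply, map_finsuppSum]
    refine Finsupp.sum_congr fun i _ => ?_
    rw [map_finsuppSum]
    exact Finsupp.sum_congr fun j _ => toPUF_single _ _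
  rw [h1, toPUF, toPUF, Finsupp.sum_mul]
  refine Finsupp.sum_congr fun i _ => ?_
  rw [Finsupp.mul_sum]
  refine Finsupp.sum_congr fun j _ => ?_
  rw [Polynomial.monomial_mul_monomial, Unitization.inr_mul]

end NUPolyAux

/-- The non-unital polynomial algebra `R[x]` over a non-unital ring `R`:
the type of finitely supported coefficient sequences (i.e. of
`AddMonoidAlgebra R ℕ`) equipped with the convolution product. -/
structure NUPoly (R : Type*) [NonUnitalRing R] where
  /-- the coefficient sequence of a non-unital polynomial -/
  toFinsupp : ℕ →₀ R

namespace NUPoly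

open NUPolyAux

variable {R : Type*} [NonUnitalRing R]

theorem toFinsupp_injective :
    Function.Injective (toFinsupp : NUPoly R → (ℕ →₀ R)) := by
  rintro ⟨p⟩ ⟨q⟩ h
  simpa using h

instance instZero : Zero (NUPoly R) := ⟨⟨0⟩⟩
instance instAdd : Add (NUPoly R) := ⟨fun p q => ⟨p.toFinsupp + q.toFinsupp⟩⟩
instance instNeg : Neg (NUPoly R) := ⟨fun p => ⟨-p.toFinsupp⟩⟩
instance instSub : Sub (NUPoly R) := ⟨fun p q => ⟨p.toFinsupp - q.toFinsupp⟩⟩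
instance instSMul {S : Type*} [SMulZeroClass S R] : SMul S (NUPoly R) :=
  ⟨fun c p => ⟨c • p.toFinsupp⟩⟩
instance instMul : Mul (NUPoly R) := ⟨fun p q => ⟨mulF p.toFinsupp q.toFinsupp⟩⟩

@[simp] theorem toFinsupp_zero : (0 : NUPoly R).toFinsupp = 0 := rfl
@[simp] theorem toFinsupp_add (p q : NUPoly R) :
    (p + q).toFinsupp = p.toFinsupp + q.toFinsupp := rfl
@[simp] theorem toFinsupp_smul {S : Type*} [SMulZeroClass S R] (c : S) (p : NUPoly R) :
    (c • p).toFinsupp = c • p.toFinsupp := rfl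
@[simp] theorem toFinsupp_mul (p q : NUPoly R) :
    (p * q).toFinsupp = mulF p.toFinsupp q.toFinsupp := rfl

instance instAddCommGroup : AddCommGroup (NUPoly R) :=
  toFinsupp_injective.addCommGroup toFinsupp rfl (fun _ _ => rfl) (fun _ => rfl)
    (fun _ _ => rfl) (fun _ _ => rfl) (fun _ _ => rfl)

/-- The interpretation of `p ∈ R[x]` as a polynomial over the unitization of `R`. -/
def toPU (p : NUPoly R) : Polynomial (Unitization ℤ R) := toPUF p.toFinsupp

theorem toPU_injective : Function.Injective (toPU (R := R)) :=
  fun _ _ h => toFinsupp_injective (toPUF_injective h)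

theorem toPU_zero : toPU (0 : NUPoly R) = 0 := toPUF_zero
theorem toPU_add (p q : NUPoly R) : toPU (p + q) = toPU p + toPU q := toPUF_add _ _
theorem toPU_mul (p q : NUPoly R) : toPU (p * q) = toPU p * toPU q := toPUF_mulF _ _

instance instNonUnitalRing : NonUnitalRing (NUPoly R) :=
  { instAddCommGroup, instMul with
    left_distrib := fun p q r => toPU_injective <| by
      rw [toPU_mul, toPU_add, toPU_add, toPU_mul, toPU_mul, mul_add]
    right_distrib := fun p q r => toPU_injective <| by
      rw [toPU_mul, toPU_add, toPU_add, toPU_mul, toPU_mul, add_mul]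
    zero_mul := fun p => toPU_injective <| by
      rw [toPU_mul, toPU_zero, zero_mul]
    mul_zero := fun p => toPU_injective <| by
      rw [toPU_mul, toPU_zero, mul_zero]
    mul_assoc := fun p q r => toPU_injective <| by
      rw [toPU_mul, toPU_mul, toPU_mul, toPU_mul, mul_assoc] }

theorem mul_def (p q : NUPoly R) :
    (p * q).toFinsupp
      = p.toFinsupp.sum fun i a => q.toFinsupp.sum fun j b =>
          Finsupp.single (i + j) (a * b) := rfl

theorem mul_apply (p q : NUPoly R) (n : ℕ) :
    (p * q).toFinsupp n = ∑ x ∈ Finset.HasAntidiagonal.antidiagonal n, p.toFinsupp x.1 * q.toFinsupp x.2 := by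
  apply Unitization.inr_injective (R := ℤ)
  have h : (Unitization.inr ((p * q).toFinsupp n) : Unitization ℤ R)
      = ∑ x ∈ Finset.HasAntidiagonal.antidiagonal n,
          (Unitization.inr (p.toFinsupp x.1) * Unitization.inr (q.toFinsupp x.2) :
            Unitization ℤ R) := by
    rw [← coeff_toPUF, ← toPU, toPU_mul, Polynomial.coeff_mul]
    exact Finset.sum_congr rfl fun x _ => by
      rw [toPU, toPU, coeff_toPUF, coeff_toPUF]
  rw [h]
  simp only [← Unitization.inr_mul]
  exact (map_sum (Unitization.inrHom ℤ ℤ R) (fun x => p.toFinsupp x.1 * q.toFinsupp x.2)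
    (Finset.HasAntidiagonal.antidiagonal n)).symm

section Module

variable {k : Type*} [Semiring k] [Module k R]

/-- `toFinsupp` as an additive monoid homomorphism. -/
def toFinsuppAddHom : NUPoly R →+ (ℕ →₀ R) where
  toFun := toFinsupp
  map_zero' := rfl
  map_add' := fun _ _ => rfl

instance instModule : Module k (NUPoly R) :=
  Function.Injective.module k toFinsuppAddHom toFinsupp_injective fun _ _ => rfl

end Module

section Scalars

variable (k : Type*) [CommRing k] [Module k R]

instance instIsScalarTower [IsScalarTower k R R] :
    IsScalarTower k (NUPoly R) (NUPoly R) := by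
  refine ⟨fun c p q => ?_⟩
  rw [smul_eq_mul, smul_eq_mul]
  apply toFinsupp_injective
  simp only [toFinsupp_mul, toFinsupp_smul]
  rw [mulF, mulF, Finsupp.sum_smul_index' (by simp), Finsupp.smul_sum]
  refine Finsupp.sum_congr fun i _ => ?_
  rw [Finsupp.smul_sum]
  refine Finsupp.sum_congr fun j _ => ?_
  rw [smul_mul_assoc, Finsupp.smul_single]

instance instSMulCommClass [SMulCommClass k R R] :
    SMulCommClass k (NUPoly R) (NUPoly R) := by
  refine ⟨fun c p q => ?_⟩
  rw [smul_eq_mul, smul_eq_mul]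
  apply toFinsupp_injective
  simp only [toFinsupp_mul, toFinsupp_smul]
  rw [mulF, mulF, Finsupp.smul_sum]
  refine Finsupp.sum_congr fun i _ => ?_
  rw [Finsupp.sum_smul_index' (by simp), Finsupp.smul_sum]
  refine Finsupp.sum_congr fun j _ => ?_
  rw [mul_smul_comm, Finsupp.smul_single]

end Scalars

/-- The non-unital polynomial `r·xⁱ`. -/
def single (i : ℕ) (a : R) : NUPoly R := ⟨Finsupp.single i a⟩

/-- Evaluation at `x = 0` (the constant coefficient), as a non-unital algebra
homomorphism `∂⁰ : R[x] → R`. -/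
def atZero (k R : Type*) [CommRing k] [NonUnitalRing R] [Module k R] :
    NUPoly R →ₙₐ[k] R where
  toFun p := p.toFinsupp 0
  map_add' p q := by
    show (p + q).toFinsupp 0 = p.toFinsupp 0 + q.toFinsupp 0
    rw [toFinsupp_add, Finsupp.add_apply]
  map_smul' c p := by
    show (c • p).toFinsupp 0 = c • p.toFinsupp 0
    rw [toFinsupp_smul, Finsupp.smul_apply]
  map_zero' := rfl
  map_mul' p q := by
    show (p * q).toFinsupp 0 = p.toFinsupp 0 * q.toFinsupp 0
    rw [mul_apply, Finset.HasAntidiagonal.antidiagonal_zero, Finset.sum_singleton]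

/-- Evaluation at `x = 1` (the sum of the coefficients), as a non-unital algebra
homomorphism `∂¹ : R[x] → R`. -/
def coeffSum (k R : Type*) [CommRing k] [NonUnitalRing R] [Module k R] :
    NUPoly R →ₙₐ[k] R where
  toFun p := p.toFinsupp.sum fun _ a => a
  map_add' p q := by
    show ((p + q).toFinsupp.sum fun _ a => a)
      = (p.toFinsupp.sum fun _ a => a) + q.toFinsupp.sum fun _ a => a
    rw [toFinsupp_add]
    exact Finsupp.sum_add_index' (fun _ => rfl) (fun _ _ _ => rfl)
  map_smul' c p := by
    show ((c • p).toFinsupp.sum fun _ a => a) = c • p.toFinsupp.sum fun _ a => a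
    rw [toFinsupp_smul]
    have h1 : ((c • p.toFinsupp).sum fun _ a => a) = p.toFinsupp.sum fun _ a => c • a :=
      Finsupp.sum_smul_index' (h := fun (_ : ℕ) (a : R) => a) (fun _ => rfl)
    have h2 : (c • p.toFinsupp.sum fun _ a => a) = p.toFinsupp.sum fun _ a => c • a :=
      Finsupp.smul_sum
    rw [h1, h2]
  map_zero' := by
    show ((0 : NUPoly R).toFinsupp.sum fun _ a => a) = 0
    rw [toFinsupp_zero]
    exact Finsupp.sum_zero_index
  map_mul' p q := by
    classical
    show ((p * q).toFinsupp.sum fun _ a => a)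
      = (p.toFinsupp.sum fun _ a => a) * q.toFinsupp.sum fun _ a => a
    rw [mul_def, Finsupp.sum_sum_index (fun _ => rfl) (fun _ _ _ => rfl)]
    have h1 : (p.toFinsupp.sum fun i a =>
          (q.toFinsupp.sum fun j b => Finsupp.single (i + j) (a * b)).sum fun _ c => c)
        = p.toFinsupp.sum fun i a => q.toFinsupp.sum fun j b => a * b := by
      refine Finsupp.sum_congr fun i _ => ?_
      rw [Finsupp.sum_sum_index (fun _ => rfl) (fun _ _ _ => rfl)]
      exact Finsupp.sum_congr fun j _ => Finsupp.sum_single_index rfl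
    have h2 : (p.toFinsupp.sum fun i a => q.toFinsupp.sum fun j b => a * b)
        = p.toFinsupp.sum fun i a => a * q.toFinsupp.sum fun _ b => b :=
      Finsupp.sum_congr fun i _ => (Finsupp.mul_sum _ _).symm
    rw [h1, h2, ← Finsupp.sum_mul]

@[simp] theorem atZero_apply (k : Type*) [CommRing k] [Module k R] (p : NUPoly R) :
    atZero k R p = p.toFinsupp 0 := rfl

@[simp] theorem coeffSum_apply (k : Type*) [CommRing k] [Module k R] (p : NUPoly R) :
    coeffSum k R p = p.toFinsupp.sum fun _ a => a := rfl

end NUPoly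

section Homotopy

variable (k : Type*) [CommRing k]
variable {A B : Type*} [NonUnitalRing A] [Module k A] [NonUnitalRing B] [Module k B]

/-- Two non-unital algebra homomorphisms `f₀ f₁ : A → B` are *elementary homotopic*
if there is a homomorphism `H : A → B[x]` with `∂⁰ ∘ H = f₀` and `∂¹ ∘ H = f₁`. -/
def ElemHomotopic (f₀ f₁ : A →ₙₐ[k] B) : Prop :=
  ∃ H : A →ₙₐ[k] NUPoly B,
    (NUPoly.atZero k B).comp H = f₀ ∧ (NUPoly.coeffSum k B).comp H = f₁

/-- *Homotopy* of non-unital algebra homomorphisms: the equivalence relation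
generated by elementary homotopy. -/
def NUHomotopic (f₀ f₁ : A →ₙₐ[k] B) : Prop :=
  Relation.EqvGen (ElemHomotopic k) f₀ f₁

end Homotopy

section TensorUnitization

variable (k : Type*) [CommRing k]

/-- `γ_u` : for a `k`-linear map `u : C → B` into a non-unital `k`-algebra `B`,
the unique `k`-algebra homomorphism `TensorAlgebra k C → Unitization k B` with
`γ_u (ι c) = inr (u c)`. -/
noncomputable def gammaMap {B C : Type*}
    [NonUnitalRing B] [Module k B] [SMulCommClass k B B] [IsScalarTower k B B]
    [NonUnitalRing C] [Module k C]
    (u : C →ₗ[k] B) : TensorAlgebra k C →ₐ[k] Unitization k B :=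
  TensorAlgebra.lift k ((Unitization.inrHom k k B).comp u)

/-- `η_C := γ_{id C}` : the canonical `k`-algebra homomorphism
`TensorAlgebra k C → Unitization k C`. -/
noncomputable def etaHom (C : Type*)
    [NonUnitalRing C] [Module k C] [SMulCommClass k C C] [IsScalarTower k C C] :
    TensorAlgebra k C →ₐ[k] Unitization k C :=
  gammaMap k (LinearMap.id (R := k) (M := C))

/-- `J(C) := ker η_C`, the ideal of the universal extension
`J(C) → T(C) → C`, as a non-unital subalgebra of the tensor algebra. -/
noncomputable def jIdeal (C : Type*)
    [NonUnitalRing C] [Module k C] [SMulCommClass k C C] [IsScalarTower k C C] :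
    NonUnitalSubalgebra k (TensorAlgebra k C) where
  carrier := {a | etaHom k C a = 0}
  add_mem' := fun {p q} hp hq => by
    simp only [Set.mem_setOf_eq] at *
    rw [map_add, hp, hq, add_zero]
  zero_mem' := by simp only [Set.mem_setOf_eq, map_zero]
  mul_mem' := fun {p q} hp hq => by
    simp only [Set.mem_setOf_eq] at *
    rw [map_mul, hp, zero_mul]
  smul_mem' := fun c p hp => by
    simp only [Set.mem_setOf_eq] at *
    rw [map_smul, hp, smul_zero]

/-- The kernel of a non-unital algebra homomorphism, as a non-unital
subalgebra. -/
noncomputable def nuaKer {B C : Type*}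
    [NonUnitalRing B] [Module k B] [NonUnitalRing C] [Module k C]
    (α : B →ₙₐ[k] C) : NonUnitalSubalgebra k B where
  carrier := {b | α b = 0}
  add_mem' := fun {p q} hp hq => by
    simp only [Set.mem_setOf_eq] at *
    rw [map_add, hp, hq, add_zero]
  zero_mem' := by simp only [Set.mem_setOf_eq, map_zero]
  mul_mem' := fun {p q} hp hq => by
    simp only [Set.mem_setOf_eq] at *
    rw [map_mul, hp, zero_mul]
  smul_mem' := fun c p hp => by
    simp only [Set.mem_setOf_eq] at *
    rw [map_smul, hp, smul_zero]

/-- The functorial extension of a non-unital algebra homomorphism `φ : B → C`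
to unitizations, `Unitization k B → Unitization k C` (with
`inr b ↦ inr (φ b)`). -/
noncomputable def unitizationMap {B C : Type*}
    [NonUnitalRing B] [Module k B] [SMulCommClass k B B] [IsScalarTower k B B]
    [NonUnitalRing C] [Module k C] [SMulCommClass k C C] [IsScalarTower k C C]
    (φ : B →ₙₐ[k] C) : Unitization k B →ₐ[k] Unitization k C :=
  Unitization.lift ((Unitization.inrNonUnitalAlgHom k C).comp φ)

end TensorUnitization


/-! The homotopy `Ū` is the straight line from `inr ∘ β` to `inr ∘ γ`, extended to the tensor
algebra. Since `α ∘ β = α ∘ γ = id`, the line becomes constant after applying `α`, which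
gives (i); evaluating the line at `0` and `1` gives (ii) by the universal property of the tensor
algebra. By (i), for `a ∈ J(C)` every coefficient of `Ū a` is killed by the unitization of `α`,
so lies in `inr (ker α)`; as `inr` is injective, `Ū` restricted to `J(C)` factors through
`(ker α)[x]`, and this factorization is the elementary homotopy. -/

open Polynomial

namespace NUPoly

variable {k R A : Type*} [CommRing k] [NonUnitalRing R] [Module k R] [Ring A] [Algebra k A]

def toPolynomial (φ : R →ₙₐ[k] A) : NUPoly R →ₙₐ[k] A[X] where
  toFun p := ⟨⟨p.toFinsupp.mapRange φ (map_zero φ)⟩⟩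
  map_smul' c p := by ext n; simp
  map_zero' := by ext n; simp
  map_add' p q := by ext n; simp
  map_mul' p q := by
    ext n
    rw [coeff_mul]
    change φ ((p * q).toFinsupp n) = _
    rw [mul_apply, map_sum]
    simp only [map_mul]
    rfl

@[simp]
theorem coeff_toPolynomial (φ : R →ₙₐ[k] A) (p : NUPoly R) (n : ℕ) :
    (toPolynomial φ p).coeff n = φ (p.toFinsupp n) := rfl

theorem eval_one_toPolynomial (φ : R →ₙₐ[k] A) (p : NUPoly R) :
    (toPolynomial φ p).eval 1 = φ (coeffSum k R p) := by
  rw [eval_eq_sum, Polynomial.sum_def, coeffSum_apply, map_finsuppSum, Finsupp.sum]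
  simp only [one_pow, mul_one, coeff_toPolynomial]
  refine Finset.sum_subset (fun n hn => ?_) (fun n _ hn => notMem_support_iff.mp hn)
  rw [mem_support_iff, coeff_toPolynomial] at hn
  exact Finsupp.mem_support_iff.mpr fun h => hn (by rw [h, map_zero])

variable {φ : R →ₙₐ[k] A}

theorem toPolynomial_injective (hφ : Function.Injective φ) :
    Function.Injective (toPolynomial φ) := fun p q h =>
  toFinsupp_injective <| Finsupp.ext fun n => hφ <| by
    simpa using congr_arg (coeff · n) h

theorem exists_toPolynomial_eq (hφ : Function.Injective φ) {f : A[X]}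
    (hf : ∀ n, f.coeff n ∈ Set.range φ) : ∃ p, toPolynomial φ p = f := by
  have h0 : Function.invFun φ 0 = 0 :=
    hφ (by rw [Function.invFun_eq ⟨0, map_zero φ⟩, map_zero])
  exact ⟨⟨f.toFinsupp.coeff.mapRange (Function.invFun φ) h0⟩,
    Polynomial.ext fun n => Function.invFun_eq (hf n)⟩

theorem exists_toPolynomial_comp_eq {S : Type*} [NonUnitalNonAssocSemiring S] [Module k S]
    (hφ : Function.Injective φ) (F : S →ₙₐ[k] A[X])
    (hF : ∀ s n, (F s).coeff n ∈ Set.range φ) :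
    ∃ H : S →ₙₐ[k] NUPoly R, (toPolynomial φ).comp H = F := by
  choose lift hlift using fun s => exists_toPolynomial_eq hφ (hF s)
  have hinj := toPolynomial_injective hφ
  refine ⟨{ toFun := lift,
             map_smul' := fun c s => hinj (by simp [hlift]),
             map_zero' := hinj (by simp [hlift]),
             map_add' := fun s t => hinj (by simp [hlift]),
             map_mul' := fun s t => hinj (by simp [hlift]) },
    NonUnitalAlgHom.ext hlift⟩

theorem exists_elemHomotopy_of_toPolynomial {S : Type*} [NonUnitalNonAssocSemiring S]
    [Module k S] (hφ : Function.Injective φ) (F : S →ₙₐ[k] A[X])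
    (hF : ∀ s n, (F s).coeff n ∈ Set.range φ) {f₀ f₁ : S →ₙₐ[k] R}
    (h₀ : ∀ s, (F s).coeff 0 = φ (f₀ s)) (h₁ : ∀ s, (F s).eval 1 = φ (f₁ s)) :
    ∃ H : S →ₙₐ[k] NUPoly R, (toPolynomial φ).comp H = F ∧
      (atZero k R).comp H = f₀ ∧ (coeffSum k R).comp H = f₁ := by
  obtain ⟨H, hH⟩ := exists_toPolynomial_comp_eq hφ F hF
  have hHs (s : S) : toPolynomial φ (H s) = F s := DFunLike.congr_fun hH s
  refine ⟨H, hH, NonUnitalAlgHom.ext fun s => hφ ?_, NonUnitalAlgHom.ext fun s => hφ ?_⟩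
  · rw [← h₀, ← hHs]
    rfl
  · rw [← h₁, ← hHs, eval_one_toPolynomial]
    rfl

end NUPoly

section LineHomotopy

variable {k M A : Type*} [CommRing k] [AddCommGroup M] [Module k M] [Ring A] [Algebra k A]

def linePath (f g : M →ₗ[k] A) : M →ₗ[k] A[X] :=
  (CAlgHom : A →ₐ[k] A[X]).toLinearMap ∘ₗ f
    + LinearMap.mulRight k X ∘ₗ (CAlgHom : A →ₐ[k] A[X]).toLinearMap ∘ₗ (g - f)

/-- For `f = inr ∘ β` and `g = inr ∘ γ` this is the map `Ū` of the statement. -/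
def lineHomotopy (f g : M →ₗ[k] A) : TensorAlgebra k M →ₐ[k] A[X] :=
  TensorAlgebra.lift k (linePath f g)

@[simp]
theorem lineHomotopy_ι (f g : M →ₗ[k] A) (c : M) :
    lineHomotopy f g (TensorAlgebra.ι k c) = C (f c) + C (g c - f c) * X := by
  simp [lineHomotopy, linePath]

theorem lineHomotopy_eq_iff (f g : M →ₗ[k] A) (U : TensorAlgebra k M →ₐ[k] A[X]) :
    U = lineHomotopy f g ↔ ∀ c, U (TensorAlgebra.ι k c) = C (f c) + C (g c - f c) * X := by
  rw [lineHomotopy, ← TensorAlgebra.lift_unique, LinearMap.ext_iff]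
  simp [linePath]

theorem coeff_zero_lineHomotopy (f g : M →ₗ[k] A) (a : TensorAlgebra k M) :
    (lineHomotopy f g a).coeff 0 = TensorAlgebra.lift k f a := by
  let evalZero : A[X] →ₐ[k] A := eval₂AlgHom (AlgHom.id k A) 0 fun _ => Commute.zero_right _
  have h : evalZero.comp (lineHomotopy f g) = TensorAlgebra.lift k f :=
    TensorAlgebra.hom_ext <| LinearMap.ext fun c => by simp [evalZero]
  simpa [coeff_zero_eq_eval_zero, evalZero] using DFunLike.congr_fun h a

theorem eval_one_lineHomotopy (f g : M →ₗ[k] A) (a : TensorAlgebra k M) :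
    (lineHomotopy f g a).eval 1 = TensorAlgebra.lift k g a := by
  let evalOne : A[X] →ₐ[k] A := eval₂AlgHom (AlgHom.id k A) 1 fun _ => Commute.one_right _
  have h : evalOne.comp (lineHomotopy f g) = TensorAlgebra.lift k g :=
    TensorAlgebra.hom_ext <| LinearMap.ext fun c => by simp [evalOne]
  simpa [evalOne] using DFunLike.congr_fun h a

theorem map_lineHomotopy_of_comp_eq {A' : Type*} [Ring A'] [Algebra k A'] (ψ : A →ₐ[k] A')
    {f g : M →ₗ[k] A} (h : ψ.toLinearMap ∘ₗ f = ψ.toLinearMap ∘ₗ g)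
    (a : TensorAlgebra k M) :
    (lineHomotopy f g a).map (ψ : A →+* A') =
      C (TensorAlgebra.lift k (ψ.toLinearMap ∘ₗ f) a) := by
  have hψ : (mapAlgHom ψ).comp (lineHomotopy f g) =
      CAlgHom.comp (TensorAlgebra.lift k (ψ.toLinearMap ∘ₗ f)) :=
    TensorAlgebra.hom_ext <| LinearMap.ext fun c => by
      simp [show ψ (f c) = ψ (g c) from LinearMap.congr_fun h c]
  simpa using DFunLike.congr_fun hψ a

end LineHomotopy

section Unitization

variable {k B C : Type*} [CommRing k]
  [NonUnitalRing B] [Module k B] [SMulCommClass k B B] [IsScalarTower k B B]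
  [NonUnitalRing C] [Module k C] [SMulCommClass k C C] [IsScalarTower k C C]

@[simp]
theorem unitizationMap_inr (φ : B →ₙₐ[k] C) (b : B) :
    unitizationMap k φ (b : Unitization k B) = φ b := by
  simp [unitizationMap]

theorem exists_eq_inr_of_unitizationMap_eq_zero {φ : B →ₙₐ[k] C} {x : Unitization k B}
    (hx : unitizationMap k φ x = 0) : ∃ b, φ b = 0 ∧ x = b := by
  rw [← x.inl_fst_add_inr_snd_eq, map_add, unitizationMap_inr, ← Unitization.algebraMap_eq_inl,
    AlgHom.commutes, Unitization.algebraMap_eq_inl] at hx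
  have hfst : x.fst = 0 := by simpa using congr_arg (·.fst) hx
  have hsnd : φ x.snd = 0 := by simpa using congr_arg (·.snd) hx
  exact ⟨x.snd, hsnd, Unitization.ext hfst rfl⟩

theorem map_unitizationMap_lineHomotopy {α : B →ₙₐ[k] C} {β γ : C →ₗ[k] B}
    (hβ : ∀ c, α (β c) = c) (hγ : ∀ c, α (γ c) = c) (a : TensorAlgebra k C) :
    (lineHomotopy ((Unitization.inrHom k k B).comp β) ((Unitization.inrHom k k B).comp γ) a).map
      (unitizationMap k α).toRingHom = Polynomial.C (etaHom k C a) := by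
  have hβ' : (unitizationMap k α).toLinearMap ∘ₗ (Unitization.inrHom k k B).comp β =
      (Unitization.inrHom k k C).comp .id := LinearMap.ext fun c => by simp [hβ]
  have hγ' : (unitizationMap k α).toLinearMap ∘ₗ (Unitization.inrHom k k B).comp γ =
      (Unitization.inrHom k k C).comp .id := LinearMap.ext fun c => by simp [hγ]
  rw [AlgHom.toRingHom_eq_coe, map_lineHomotopy_of_comp_eq _ (hβ'.trans hγ'.symm), hβ']
  rfl

end Unitization

theorem classifying_map_unique_up_to_elementary_homotopy_general
    (k : Type*) [CommRing k] {B C : Type*}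
    [NonUnitalRing B] [Module k B] [SMulCommClass k B B] [IsScalarTower k B B]
    [NonUnitalRing C] [Module k C] [SMulCommClass k C C] [IsScalarTower k C C]
    (α : B →ₙₐ[k] C)
    (β γ : C →ₗ[k] B) (hβ : ∀ c : C, α (β c) = c) (hγ : ∀ c : C, α (γ c) = c)
    -- the classifying maps
    (ξβ ξγ : jIdeal k C →ₙₐ[k] nuaKer k α)
    (hξβ : ∀ a : jIdeal k C,
      (Unitization.inr ((ξβ a : B)) : Unitization k B)
        = gammaMap k β (a : TensorAlgebra k C))
    (hξγ : ∀ a : jIdeal k C,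
      (Unitization.inr ((ξγ a : B)) : Unitization k B)
        = gammaMap k γ (a : TensorAlgebra k C)) :
    -- existence and uniqueness of `Ū`
    (∃! U : TensorAlgebra k C →ₐ[k] Polynomial (Unitization k B),
      ∀ c : C, U (TensorAlgebra.ι k c)
        = Polynomial.C (Unitization.inr (β c))
          + Polynomial.C (Unitization.inr (γ c - β c)) * Polynomial.X) ∧
    -- and its properties:
    ∀ Ubar : TensorAlgebra k C →ₐ[k] Polynomial (Unitization k B),
      (∀ c : C, Ubar (TensorAlgebra.ι k c)
        = Polynomial.C (Unitization.inr (β c))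
          + Polynomial.C (Unitization.inr (γ c - β c)) * Polynomial.X) →
      -- (i)
      (∀ a : TensorAlgebra k C,
        Polynomial.map (unitizationMap k α).toRingHom (Ubar a)
          = Polynomial.C (etaHom k C a)) ∧
      -- (ii)
      (∀ a : TensorAlgebra k C, (Ubar a).coeff 0 = gammaMap k β a) ∧
      (∀ a : TensorAlgebra k C, (Ubar a).eval 1 = gammaMap k γ a) ∧
      -- the coefficients of `Ū a` lie in `inr (ker α)` for `a ∈ J(C)`
      (∀ a : TensorAlgebra k C, etaHom k C a = 0 → ∀ i : ℕ,
        ∃ x : B, α x = 0 ∧ (Ubar a).coeff i = Unitization.inr x) ∧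
      -- `Ū` realizes an elementary homotopy between `ξ_β` and `ξ_γ`
      ∃ H : jIdeal k C →ₙₐ[k] NUPoly (nuaKer k α),
        (∀ (a : jIdeal k C) (i : ℕ),
          (Unitization.inr (((H a).toFinsupp i : nuaKer k α) : B) : Unitization k B)
            = (Ubar (a : TensorAlgebra k C)).coeff i) ∧
        (NUPoly.atZero k (nuaKer k α)).comp H = ξβ ∧
        (NUPoly.coeffSum k (nuaKer k α)).comp H = ξγ := by
  set f := (Unitization.inrHom k k B).comp β
  set g := (Unitization.inrHom k k B).comp γ
  have hUbar (U : TensorAlgebra k C →ₐ[k] Polynomial (Unitization k B)) :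
      (∀ c, U (TensorAlgebra.ι k c) = Polynomial.C (Unitization.inr (β c))
        + Polynomial.C (Unitization.inr (γ c - β c)) * X) ↔ U = lineHomotopy f g := by
    simp [lineHomotopy_eq_iff, f, g]
  refine ⟨⟨_, (hUbar _).2 rfl, fun U hU => (hUbar U).1 hU⟩, fun Ubar hU => ?_⟩
  obtain rfl := (hUbar Ubar).1 hU
  have hker (a : TensorAlgebra k C) (ha : etaHom k C a = 0) (i : ℕ) :
      ∃ x, α x = 0 ∧ (lineHomotopy f g a).coeff i = Unitization.inr x :=
    exists_eq_inr_of_unitizationMap_eq_zero <| by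
      simpa [ha] using congr_arg (coeff · i) (map_unitizationMap_lineHomotopy hβ hγ a)
  refine ⟨map_unitizationMap_lineHomotopy hβ hγ, coeff_zero_lineHomotopy f g,
    eval_one_lineHomotopy f g, hker, ?_⟩
  obtain ⟨H, hH, hH₀, hH₁⟩ := NUPoly.exists_elemHomotopy_of_toPolynomial
    (φ := (Unitization.inrNonUnitalAlgHom k B).comp
      (NonUnitalSubalgebraClass.subtype (nuaKer k α)))
    (f₀ := ξβ) (f₁ := ξγ) (Unitization.inr_injective.comp Subtype.val_injective)
    ((lineHomotopy f g).toNonUnitalAlgHom.comp (NonUnitalSubalgebraClass.subtype (jIdeal k C)))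
    (fun a n => by
      obtain ⟨x, hx, hcoeff⟩ := hker a a.2 n
      exact ⟨⟨x, hx⟩, hcoeff.symm⟩)
    (fun a => (coeff_zero_lineHomotopy f g a).trans (hξβ a).symm)
    (fun a => (eval_one_lineHomotopy f g a).trans (hξγ a).symm)
  exact ⟨H, fun a i => congr_arg (coeff · i) (DFunLike.congr_fun hH a), hH₀, hH₁⟩

/-- Let `α : B → C` be a surjective non-unital `k`-algebra
homomorphism and `β, γ : C → B` two `k`-linear splittings of `α`, with
classifying maps `ξ_β, ξ_γ : J(C) → ker α`.  Let
`Ū : TensorAlgebra k C → Polynomial (Unitization k B)` be the unique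
`k`-algebra homomorphism with `Ū (ι c) = C (inr (β c)) + C (inr (γ c - β c)) · X`.
Then:
(i) `Polynomial.map (Unitization.map α) ∘ Ū = Polynomial.C ∘ η_C`;
(ii) evaluation at `X = 0` composed with `Ū` equals `γ_β`, and evaluation at
`X = 1` composed with `Ū` equals `γ_γ`.  Consequently, for every `a ∈ J(C)`
all coefficients of `Ū a` lie in `inr (ker α)`, and `Ū` realizes an elementary
polynomial homotopy between the classifying maps `ξ_β` and `ξ_γ`; i.e. the
classifying map of a `k`-split extension is unique up to elementary
homotopy. -/
theorem classifying_map_unique_up_to_elementary_homotopy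
    (k : Type*) [CommRing k] {B C : Type*}
    [NonUnitalRing B] [Module k B] [SMulCommClass k B B] [IsScalarTower k B B]
    [NonUnitalRing C] [Module k C] [SMulCommClass k C C] [IsScalarTower k C C]
    (α : B →ₙₐ[k] C) (hα : Function.Surjective α)
    (β γ : C →ₗ[k] B) (hβ : ∀ c : C, α (β c) = c) (hγ : ∀ c : C, α (γ c) = c)
    -- the classifying maps
    (ξβ ξγ : jIdeal k C →ₙₐ[k] nuaKer k α)
    (hξβ : ∀ a : jIdeal k C,
      (Unitization.inr ((ξβ a : B)) : Unitization k B)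
        = gammaMap k β (a : TensorAlgebra k C))
    (hξγ : ∀ a : jIdeal k C,
      (Unitization.inr ((ξγ a : B)) : Unitization k B)
        = gammaMap k γ (a : TensorAlgebra k C)) :
    -- existence and uniqueness of `Ū`
    (∃! U : TensorAlgebra k C →ₐ[k] Polynomial (Unitization k B),
      ∀ c : C, U (TensorAlgebra.ι k c)
        = Polynomial.C (Unitization.inr (β c))
          + Polynomial.C (Unitization.inr (γ c - β c)) * Polynomial.X) ∧
    -- and its properties:
    ∀ Ubar : TensorAlgebra k C →ₐ[k] Polynomial (Unitization k B),
      (∀ c : C, Ubar (TensorAlgebra.ι k c)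
        = Polynomial.C (Unitization.inr (β c))
          + Polynomial.C (Unitization.inr (γ c - β c)) * Polynomial.X) →
      -- (i)
      (∀ a : TensorAlgebra k C,
        Polynomial.map (unitizationMap k α).toRingHom (Ubar a)
          = Polynomial.C (etaHom k C a)) ∧
      -- (ii)
      (∀ a : TensorAlgebra k C, (Ubar a).coeff 0 = gammaMap k β a) ∧
      (∀ a : TensorAlgebra k C, (Ubar a).eval 1 = gammaMap k γ a) ∧
      -- the coefficients of `Ū a` lie in `inr (ker α)` for `a ∈ J(C)`
      (∀ a : TensorAlgebra k C, etaHom k C a = 0 → ∀ i : ℕ,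
        ∃ x : B, α x = 0 ∧ (Ubar a).coeff i = Unitization.inr x) ∧
      -- `Ū` realizes an elementary homotopy between `ξ_β` and `ξ_γ`
      ∃ H : jIdeal k C →ₙₐ[k] NUPoly (nuaKer k α),
        (∀ (a : jIdeal k C) (i : ℕ),
          (Unitization.inr (((H a).toFinsupp i : nuaKer k α) : B) : Unitization k B)
            = (Ubar (a : TensorAlgebra k C)).coeff i) ∧
        (NUPoly.atZero k (nuaKer k α)).comp H = ξβ ∧
        (NUPoly.coeffSum k (nuaKer k α)).comp H = ξγ :=
  classifying_map_unique_up_to_elementary_homotopy_general k α β γ hβ hγ ξβ ξγ hξβ hξγ
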